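/- Softmax no-regret lemma: Let |A| = A ≥ 2, let T ≥ 4·log(A), and set η = (1−γ)·√(log(A)/T). Let f^1, …, f^T : S×A → ℝ satisfy |f^t(s,a)| ≤ 1/(1−γ) for all t, s, a, and let the policies π^1, …, π^T be generated by the softmax updates: π^1(·|s) is uniform on A for every s, and π^{t+1}(a|s) = π^t(a|s)·exp(η f^t(s,a)) / Σ_{a'} π^t(a'|s)·exp(η f^t(s,a')). Then for any comparator policy π^e, Σ_{t=1}^T E_{(s,a)∼d^{π^e}}[f^t(s,a) − f^t(s, π^t(s))] ≤ (2/(1−γ)) · √(log(A)·T). -/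

import Mathlib

open Finset

structure FinMDP (S A : Type*) [Fintype S] [Fintype A] where
  P : S → A → S → ℝ
  P_nonneg : ∀ s a s', 0 ≤ P s a s'
  P_sum : ∀ s a, ∑ s', P s a s' = 1
  r : S → A → ℝ
  r_nonneg : ∀ s a, 0 ≤ r s a
  r_le_one : ∀ s a, r s a ≤ 1
  disc : ℝ
  disc_pos : 0 < disc
  disc_lt_one : disc < 1
  init : S → ℝ
  init_nonneg : ∀ s, 0 ≤ init s
  init_sum : ∑ s, init s = 1

variable {S A : Type*} [Fintype S] [Fintype A] [Nonempty S] [Nonempty A]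

/-- A policy assigns to each state a probability mass function over actions. -/
def IsPolicy (π : S → A → ℝ) : Prop :=
  (∀ s a, 0 ≤ π s a) ∧ ∀ s, ∑ a, π s a = 1

/-- The Bellman operator `T^π`. -/
noncomputable def FinMDP.bellman (M : FinMDP S A) (π f : S → A → ℝ) (s : S) (a : A) : ℝ :=
  M.r s a + M.disc * ∑ s', M.P s a s' * ∑ a', π s' a' * f s' a'

/-- `Q` is the action-value function of `π`, i.e. satisfies the Bellman equation. -/
def FinMDP.IsQ (M : FinMDP S A) (π Q : S → A → ℝ) : Prop :=
  ∀ s a, Q s a = M.bellman π Q s a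

/-- The state value `V^π(s)` induced by a `Q`-function. -/
noncomputable def vOf (π Q : S → A → ℝ) (s : S) : ℝ := ∑ a, π s a * Q s a

/-- The scalar value `V^π = E_{s ∼ μ₀}[V^π(s)]`. -/
noncomputable def FinMDP.scalarV (M : FinMDP S A) (π Q : S → A → ℝ) : ℝ :=
  ∑ s, M.init s * vOf π Q s

/-- Distribution of the state at time `t` under policy `π`. -/
noncomputable def FinMDP.stateDist (M : FinMDP S A) (π : S → A → ℝ) : ℕ → S → ℝ
  | 0 => M.init
  | (t + 1) => fun s' => ∑ s, ∑ a, FinMDP.stateDist M π t s * π s a * M.P s a s'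

/-- The discounted occupancy measure `d^π(s,a) = (1-γ) ∑_t γ^t Pr^π(s_t = s, a_t = a)`. -/
noncomputable def FinMDP.occ (M : FinMDP S A) (π : S → A → ℝ) (s : S) (a : A) : ℝ :=
  (1 - M.disc) * ∑' t : ℕ, M.disc ^ t * M.stateDist π t s * π s a

/-! At every state the softmax updates are exponential weights (Hedge) on the rewards
`f^t(s, ·)`: `π^{t+1}(· | s)` is the softmax of `η ∑_{τ ≤ t} f^τ(s, ·)`. The log-partition
function `Φ_t = log ∑_a exp (η ∑_{τ < t} f^τ(s, a))` starts at `log |A|`, dominates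
`η ∑_t f^t(s, a)` for every action `a`, and, by `log E e^Y ≤ E Y + b²` for `|Y| ≤ b ≤ 1`, grows by
at most `η E_{π^t}[f^t] + η² / (1 - γ)²` per round. So the regret at every state is at most
`log |A| / η + η T / (1 - γ)²`, which is `2 / (1 - γ) · √(log |A| · T)` for the chosen `η`.
The occupancy measure of `π^e` factors as `d(s) π^e(a | s)` with `d` a probability distribution
on states, and the left-hand side is the `d`-average of these per-state regrets. -/

section Softmax

variable {ι : Type*} [Fintype ι]

noncomputable def softmax (x : ι → ℝ) (i : ι) : ℝ :=
  Real.exp (x i) / ∑ j, Real.exp (x j)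

noncomputable def logSumExp (x : ι → ℝ) : ℝ :=
  Real.log (∑ i, Real.exp (x i))

lemma sum_exp_pos [Nonempty ι] (x : ι → ℝ) : 0 < ∑ i, Real.exp (x i) :=
  sum_pos (fun _ _ => Real.exp_pos _) univ_nonempty

lemma softmax_nonneg (x : ι → ℝ) (i : ι) : 0 ≤ softmax x i := by
  unfold softmax
  positivity

lemma sum_softmax [Nonempty ι] (x : ι → ℝ) : ∑ i, softmax x i = 1 := by
  simp only [softmax, ← sum_div]
  exact div_self (sum_exp_pos x).ne'

lemma softmax_zero (i : ι) : softmax (0 : ι → ℝ) i = 1 / Fintype.card ι := by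
  simp [softmax]

lemma logSumExp_zero : logSumExp (0 : ι → ℝ) = Real.log (Fintype.card ι) := by
  simp [logSumExp]

lemma le_logSumExp [Nonempty ι] (x : ι → ℝ) (i : ι) : x i ≤ logSumExp x := by
  rw [logSumExp, Real.le_log_iff_exp_le (sum_exp_pos x)]
  exact single_le_sum (fun j _ => (Real.exp_pos (x j)).le) (mem_univ i)

lemma sum_softmax_mul_exp (x y : ι → ℝ) :
    ∑ i, softmax x i * Real.exp (y i) = (∑ i, Real.exp ((x + y) i)) / ∑ i, Real.exp (x i) := by
  simp only [softmax, Pi.add_apply, Real.exp_add, div_mul_eq_mul_div, sum_div]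

lemma log_sum_softmax_mul_exp [Nonempty ι] (x y : ι → ℝ) :
    Real.log (∑ i, softmax x i * Real.exp (y i)) = logSumExp (x + y) - logSumExp x := by
  rw [sum_softmax_mul_exp, Real.log_div (sum_exp_pos _).ne' (sum_exp_pos _).ne', logSumExp,
    logSumExp]

lemma softmax_mul_exp_div_sum [Nonempty ι] (x y : ι → ℝ) (i : ι) :
    softmax x i * Real.exp (y i) / ∑ j, softmax x j * Real.exp (y j) = softmax (x + y) i := by
  have := sum_exp_pos x
  rw [sum_softmax_mul_exp]
  simp only [softmax, Pi.add_apply, Real.exp_add]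
  field_simp

lemma log_sum_mul_exp_le {p y : ι → ℝ} (hp0 : ∀ i, 0 ≤ p i) (hp1 : ∑ i, p i = 1) {b : ℝ}
    (hb : b ≤ 1) (hy : ∀ i, |y i| ≤ b) :
    Real.log (∑ i, p i * Real.exp (y i)) ≤ ∑ i, p i * y i + b ^ 2 := by
  have hexp : ∀ i, Real.exp (y i) ≤ 1 + y i + b ^ 2 := fun i => by
    have h1 := (abs_le.mp (Real.abs_exp_sub_one_sub_id_le ((hy i).trans hb))).2
    have h2 : y i ^ 2 ≤ b ^ 2 := sq_le_sq' (abs_le.mp (hy i)).1 (abs_le.mp (hy i)).2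
    linarith
  obtain ⟨i₀, -, hi₀⟩ := exists_ne_zero_of_sum_ne_zero (hp1 ▸ one_ne_zero : ∑ i, p i ≠ 0)
  have hpos : 0 < ∑ i, p i * Real.exp (y i) :=
    sum_pos' (fun i _ => mul_nonneg (hp0 i) (Real.exp_pos _).le)
      ⟨i₀, mem_univ _, mul_pos ((hp0 i₀).lt_of_ne' hi₀) (Real.exp_pos _)⟩
  calc Real.log (∑ i, p i * Real.exp (y i)) ≤ ∑ i, p i * Real.exp (y i) - 1 :=
        Real.log_le_sub_one_of_pos hpos
    _ ≤ ∑ i, p i * (1 + y i + b ^ 2) - 1 :=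
        sub_le_sub_right (sum_le_sum fun i _ => mul_le_mul_of_nonneg_left (hexp i) (hp0 i)) 1
    _ = ∑ i, p i * y i + b ^ 2 := by
        simp only [mul_add, mul_one, sum_add_distrib, ← sum_mul, hp1]
        ring

end Softmax

section Hedge

variable {ι : Type*} [Fintype ι]

noncomputable def hedge (η : ℝ) (g : ℕ → ι → ℝ) (k : ℕ) : ι → ℝ :=
  softmax (η • ∑ τ ∈ range k, g τ)

lemma hedge_succ (η : ℝ) (g : ℕ → ι → ℝ) (k : ℕ) :
    hedge η g (k + 1) = softmax (η • ∑ τ ∈ range k, g τ + η • g k) := by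
  rw [hedge, sum_range_succ, smul_add]

lemma eq_hedge_of_update [Nonempty ι] {η : ℝ} {g p : ℕ → ι → ℝ} {T : ℕ}
    (h0 : ∀ i, p 0 i = 1 / Fintype.card ι)
    (hupd : ∀ t, t + 1 < T → ∀ i,
      p (t + 1) i = p t i * Real.exp (η * g t i) / ∑ j, p t j * Real.exp (η * g t j)) :
    ∀ t < T, p t = hedge η g t := by
  intro t
  induction t with
  | zero =>
    intro _
    ext i
    simp [hedge, h0, softmax_zero]
  | succ t ih =>
    intro ht
    ext i
    rw [hupd t ht, ih (by omega), hedge_succ, ← softmax_mul_exp_div_sum]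
    rfl

lemma logSumExp_hedge_succ_sub_le [Nonempty ι] {η B : ℝ} (hη : 0 ≤ η) (hηB : η * B ≤ 1)
    {g : ℕ → ι → ℝ} {t : ℕ} (hg : ∀ i, |g t i| ≤ B) :
    logSumExp (η • ∑ τ ∈ range (t + 1), g τ) - logSumExp (η • ∑ τ ∈ range t, g τ)
      ≤ η * ∑ i, hedge η g t i * g t i + η ^ 2 * B ^ 2 := by
  set x := η • ∑ τ ∈ range t, g τ
  have hy : ∀ i, |(η • g t) i| ≤ η * B := fun i => by
    rw [Pi.smul_apply, smul_eq_mul, abs_mul, abs_of_nonneg hη]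
    exact mul_le_mul_of_nonneg_left (hg i) hη
  calc logSumExp (η • ∑ τ ∈ range (t + 1), g τ) - logSumExp x
      = Real.log (∑ i, softmax x i * Real.exp ((η • g t) i)) := by
        rw [log_sum_softmax_mul_exp, sum_range_succ, smul_add]
    _ ≤ ∑ i, softmax x i * (η • g t) i + (η * B) ^ 2 :=
        log_sum_mul_exp_le (softmax_nonneg x) (sum_softmax x) hηB hy
    _ = η * ∑ i, hedge η g t i * g t i + η ^ 2 * B ^ 2 := by
        simp only [Pi.smul_apply, smul_eq_mul, mul_sum, hedge, x]
        ring_nf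

lemma hedge_regret_single_le [Nonempty ι] {η B : ℝ} (hη : 0 < η) (hηB : η * B ≤ 1)
    {g : ℕ → ι → ℝ} {T : ℕ} (hg : ∀ t < T, ∀ i, |g t i| ≤ B) (i : ι) :
    ∑ t ∈ range T, g t i - ∑ t ∈ range T, ∑ j, hedge η g t j * g t j
      ≤ Real.log (Fintype.card ι) / η + η * T * B ^ 2 := by
  set Φ : ℕ → ℝ := fun k => logSumExp (η • ∑ τ ∈ range k, g τ)
  have key : η * ∑ t ∈ range T, g t i
      ≤ Real.log (Fintype.card ι) + η * ∑ t ∈ range T, ∑ j, hedge η g t j * g t j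
        + T * (η ^ 2 * B ^ 2) :=
    calc η * ∑ t ∈ range T, g t i = (η • ∑ τ ∈ range T, g τ) i := by
          simp only [Pi.smul_apply, smul_eq_mul, Finset.sum_apply]
      _ ≤ Φ T := le_logSumExp _ i
      _ = Φ 0 + ∑ t ∈ range T, (Φ (t + 1) - Φ t) := by
          rw [sum_range_sub]
          ring
      _ ≤ Real.log (Fintype.card ι)
            + ∑ t ∈ range T, (η * ∑ j, hedge η g t j * g t j + η ^ 2 * B ^ 2) := by
          rw [show Φ 0 = Real.log (Fintype.card ι) by simp [Φ, logSumExp_zero]]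
          gcongr with t ht
          exact logSumExp_hedge_succ_sub_le hη.le hηB (hg t (mem_range.mp ht))
      _ = _ := by
          rw [sum_add_distrib, ← mul_sum, sum_const, card_range, nsmul_eq_mul]
          ring
  rw [div_add' _ _ _ hη.ne', le_div_iff₀ hη]
  linarith

theorem hedge_regret_le [Nonempty ι] {η B : ℝ} (hη : 0 < η) (hηB : η * B ≤ 1)
    {g : ℕ → ι → ℝ} {T : ℕ} (hg : ∀ t < T, ∀ i, |g t i| ≤ B) {q : ι → ℝ} (hq0 : ∀ i, 0 ≤ q i)
    (hq1 : ∑ i, q i = 1) :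
    ∑ t ∈ range T, (∑ i, q i * g t i - ∑ i, hedge η g t i * g t i)
      ≤ Real.log (Fintype.card ι) / η + η * T * B ^ 2 := by
  set R := Real.log (Fintype.card ι) / η + η * T * B ^ 2
  set c : ℕ → ℝ := fun t => ∑ j, hedge η g t j * g t j
  calc ∑ t ∈ range T, (∑ i, q i * g t i - c t)
      = ∑ i, q i * (∑ t ∈ range T, g t i - ∑ t ∈ range T, c t) := by
        have hc : ∑ i, q i * ∑ t ∈ range T, c t = ∑ t ∈ range T, c t := by
          rw [← sum_mul, hq1, one_mul]
        simp only [mul_sub, sum_sub_distrib]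
        rw [hc, sum_comm]
        simp only [mul_sum]
    _ ≤ ∑ i, q i * R := by
        gcongr with i
        · exact hq0 i
        · exact hedge_regret_single_le hη hηB hg i
    _ = R := by rw [← sum_mul, hq1, one_mul]

end Hedge

namespace FinMDP

variable {S A : Type*} [Fintype S] [Fintype A] (M : FinMDP S A) {π : S → A → ℝ}

lemma stateDist_nonneg (hπ : IsPolicy π) (t : ℕ) (s : S) : 0 ≤ M.stateDist π t s := by
  induction t generalizing s with
  | zero => exact M.init_nonneg s
  | succ t ih =>
    exact sum_nonneg fun s' _ => sum_nonneg fun a _ =>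
      mul_nonneg (mul_nonneg (ih s') (hπ.1 s' a)) (M.P_nonneg s' a s)

lemma sum_stateDist (hπ : IsPolicy π) (t : ℕ) : ∑ s, M.stateDist π t s = 1 := by
  induction t with
  | zero => exact M.init_sum
  | succ t ih =>
    calc ∑ s', M.stateDist π (t + 1) s'
        = ∑ s, M.stateDist π t s * ∑ a, π s a * ∑ s', M.P s a s' := by
          simp only [stateDist, mul_sum, mul_assoc]
          rw [sum_comm]
          exact sum_congr rfl fun s _ => sum_comm
      _ = 1 := by simp only [M.P_sum, mul_one, hπ.2, ih]

lemma stateDist_le_one (hπ : IsPolicy π) (t : ℕ) (s : S) : M.stateDist π t s ≤ 1 :=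
  M.sum_stateDist hπ t ▸ single_le_sum (fun s' _ => M.stateDist_nonneg hπ t s') (mem_univ s)

noncomputable def stateOcc (π : S → A → ℝ) (s : S) : ℝ :=
  (1 - M.disc) * ∑' t : ℕ, M.disc ^ t * M.stateDist π t s

lemma occ_eq_stateOcc_mul (π : S → A → ℝ) (s : S) (a : A) :
    M.occ π s a = M.stateOcc π s * π s a := by
  rw [occ, stateOcc, mul_assoc, tsum_mul_right]

lemma stateOcc_nonneg (hπ : IsPolicy π) (s : S) : 0 ≤ M.stateOcc π s :=
  mul_nonneg (sub_nonneg.mpr M.disc_lt_one.le) (tsum_nonneg fun t =>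
    mul_nonneg (pow_nonneg M.disc_pos.le t) (M.stateDist_nonneg hπ t s))

lemma summable_disc_pow_mul_stateDist (hπ : IsPolicy π) (s : S) :
    Summable fun t => M.disc ^ t * M.stateDist π t s :=
  (summable_geometric_of_lt_one M.disc_pos.le M.disc_lt_one).of_nonneg_of_le
    (fun t => mul_nonneg (pow_nonneg M.disc_pos.le t) (M.stateDist_nonneg hπ t s))
    (fun t => mul_le_of_le_one_right (pow_nonneg M.disc_pos.le t) (M.stateDist_le_one hπ t s))

lemma sum_stateOcc (hπ : IsPolicy π) : ∑ s, M.stateOcc π s = 1 := by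
  have hγ : 1 - M.disc ≠ 0 := (sub_pos.mpr M.disc_lt_one).ne'
  simp only [stateOcc, ← mul_sum]
  rw [← Summable.tsum_finsetSum fun s _ => M.summable_disc_pow_mul_stateDist hπ s]
  simp only [← mul_sum, M.sum_stateDist hπ, mul_one]
  rw [tsum_geometric_of_lt_one M.disc_pos.le M.disc_lt_one, mul_inv_cancel₀ hγ]

lemma sum_occ_mul_sub_sum_mul (hπ : IsPolicy π) (s : S) (p g : A → ℝ) :
    ∑ a, M.occ π s a * (g a - ∑ a', p a' * g a')
      = M.stateOcc π s * (∑ a, π s a * g a - ∑ a, p a * g a) := by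
  simp only [M.occ_eq_stateOcc_mul, mul_sub, sum_sub_distrib, ← sum_mul, mul_assoc, ← mul_sum,
    hπ.2 s, one_mul]

end FinMDP

lemma sum_Icc_one_eq_sum_range {M : Type*} [AddCommMonoid M] (h : ℕ → M) (n : ℕ) :
    ∑ t ∈ Icc 1 n, h t = ∑ t ∈ range n, h (t + 1) := by
  rw [range_eq_Ico, sum_Ico_add', zero_add, Ico_add_one_right_eq_Icc]

lemma div_add_mul_eq_two_div_mul_sqrt {L T c η : ℝ} (hL : 0 ≤ L) (hT : 0 < T) (hc : 0 < c)
    (hη : η = c * √(L / T)) : L / η + η * T * (1 / c) ^ 2 = 2 / c * √(L * T) := by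
  have hsT := Real.sq_sqrt hT.le
  rcases hL.eq_or_lt with rfl | hL
  · simp [hη]
  have hsL := Real.sq_sqrt hL.le
  have := Real.sqrt_pos.mpr hL
  have := Real.sqrt_pos.mpr hT
  rw [hη, Real.sqrt_div hL.le, Real.sqrt_mul hL.le]
  field_simp
  linear_combination (-√T ^ 2) * hsL - √L ^ 2 * hsT

/-- Softmax no-regret lemma. -/
theorem stmt4 (M : FinMDP S A) (hA : 2 ≤ Fintype.card A) (T : ℕ)
    (hT : 4 * Real.log (Fintype.card A) ≤ (T : ℝ))
    (η : ℝ) (hη : η = (1 - M.disc) * Real.sqrt (Real.log (Fintype.card A) / T))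
    (f : ℕ → S → A → ℝ)
    (hf : ∀ t ∈ Finset.Icc 1 T, ∀ s a, |f t s a| ≤ 1 / (1 - M.disc))
    (π : ℕ → S → A → ℝ)
    (hπ1 : ∀ s a, π 1 s a = 1 / Fintype.card A)
    (hupd : ∀ t, 1 ≤ t → t < T → ∀ s a,
      π (t + 1) s a =
        π t s a * Real.exp (η * f t s a) / ∑ a', π t s a' * Real.exp (η * f t s a'))
    (πe : S → A → ℝ) (hπe : IsPolicy πe) :
    ∑ t ∈ Finset.Icc 1 T, ∑ s, ∑ a, M.occ πe s a * (f t s a - ∑ a', π t s a' * f t s a')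
      ≤ (2 / (1 - M.disc)) * Real.sqrt (Real.log (Fintype.card A) * T) := by
  have hγ : 0 < 1 - M.disc := sub_pos.mpr M.disc_lt_one
  have hL : 0 < Real.log (Fintype.card A) := Real.log_pos (by exact_mod_cast hA)
  have hTpos : (0 : ℝ) < T := by linarith
  have hηpos : 0 < η := by
    rw [hη]
    positivity
  have hηB : η * (1 / (1 - M.disc)) ≤ 1 := by
    rw [hη, mul_comm, ← mul_assoc, one_div_mul_cancel hγ.ne', one_mul, Real.sqrt_le_one,
      div_le_one hTpos]
    linarith
  have hregret : ∀ s, ∑ t ∈ range T,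
      (∑ a, πe s a * f (t + 1) s a - ∑ a, π (t + 1) s a * f (t + 1) s a)
        ≤ 2 / (1 - M.disc) * √(Real.log (Fintype.card A) * T) := fun s => by
    have hπ_hedge : ∀ t < T, π (t + 1) s = hedge η (fun t => f (t + 1) s) t :=
      eq_hedge_of_update (p := fun t => π (t + 1) s) (hπ1 s)
        (fun t ht => hupd (t + 1) (by omega) ht s)
    rw [← div_add_mul_eq_two_div_mul_sqrt hL.le hTpos hγ hη]
    calc _ = ∑ t ∈ range T, (∑ a, πe s a * f (t + 1) s a
              - ∑ a, hedge η (fun t => f (t + 1) s) t a * f (t + 1) s a) :=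
          sum_congr rfl fun t ht => by rw [hπ_hedge t (mem_range.mp ht)]
      _ ≤ _ := hedge_regret_le hηpos hηB
          (fun t ht a => hf (t + 1) (mem_Icc.mpr ⟨by omega, by omega⟩) s a) (hπe.1 s) (hπe.2 s)
  calc _ = ∑ s, M.stateOcc πe s * ∑ t ∈ range T,
          (∑ a, πe s a * f (t + 1) s a - ∑ a, π (t + 1) s a * f (t + 1) s a) := by
        rw [sum_comm]
        refine sum_congr rfl fun s _ => ?_
        rw [mul_sum, sum_Icc_one_eq_sum_range]
        exact sum_congr rfl fun t _ => M.sum_occ_mul_sub_sum_mul hπe s _ _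
    _ ≤ ∑ s, M.stateOcc πe s * (2 / (1 - M.disc) * √(Real.log (Fintype.card A) * T)) := by
        gcongr with s
        · exact M.stateOcc_nonneg hπe s
        · exact hregret s
    _ = _ := by rw [← sum_mul, M.sum_stateOcc hπe, one_mul]
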